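/- Define functions F, G : List (Fin 3) → List (Fin 3) mutually recursively by: F [] = [], G [] = [1]; F (0::w) = 0 :: F w, F (1::w) = 2 :: F w, F (2::w) = 1 :: G w; G (0::w) = 1 :: F w, G (1::w) = 0 :: G w, G (2::w) = 2 :: G w. Then for any list w of base-3 digits representing x in little-endian order, F w represents 2x and G w represents 2x + 1, provided the output is interpreted little-endian in base 3 (with F w having the same length as w; the claim is about the numeric value Nat.ofDigits 3). -/
import Mathlib


mutual
  def mul2F : List (Fin 3) → List (Fin 3)
    | [] => []
    | d :: w =>
      match d with
      | 0 => 0 :: mul2F w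
      | 1 => 2 :: mul2F w
      | 2 => 1 :: mul2G w
  def mul2G : List (Fin 3) → List (Fin 3)
    | [] => [1]
    | d :: w =>
      match d with
      | 0 => 1 :: mul2F w
      | 1 => 0 :: mul2G w
      | 2 => 2 :: mul2G w
end

theorem mul2_fst_correct (w : List (Fin 3)) :
    Nat.ofDigits 3 ((mul2F w).map Fin.val) = 2 * Nat.ofDigits 3 (w.map Fin.val) ∧
    Nat.ofDigits 3 ((mul2G w).map Fin.val) = 2 * Nat.ofDigits 3 (w.map Fin.val) + 1 := by
  induction w with
  | nil => simp [mul2F, mul2G, Nat.ofDigits]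
  | cons d w ih =>
    obtain ⟨ihF, ihG⟩ := ih
    fin_cases d <;>
      simp [mul2F, mul2G, Nat.ofDigits_cons, ihF, ihG] <;> omega
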